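/- arXiv:2104.08868 — 5 statements merged into one kernel-verified Lean document; each statement's English description precedes it below -/
import Mathlib

section
/- Let K be a compact convex set in ℝ^n with nonempty interior, and suppose K is the convex hull of compact convex sets K₁,...,K_p with p ≤ n+1. For positive integers m₁,...,m_p, the covering functional satisfies Γ_{m₁+⋯+m_p}(K) ≤ max_{i∈[p]} (p−1+Γ_{m_i}(K_i))/p. -/
/-!
Write a point of `K = conv (K₁ ∪ ⋯ ∪ Kₚ)` as `∑ λⱼ yⱼ` with `yⱼ ∈ Kⱼ`; some weight `λᵢ` is at
least `1/p`. If `yᵢ = c + γ w` with `w ∈ Kᵢ`, for a translate `c + γ Kᵢ` of a cover of `Kᵢ`, then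
the point is `c/p + (γ/p) w + (∑ λⱼ yⱼ - yᵢ/p)`, and the last term lies in `(1 - 1/p) K`. So the
`∑ mᵢ` sets `cᵢⱼ/p + ((p - 1 + γᵢ)/p) K` cover `K`; as `K` is convex, enlarging every factor to
the largest one, after moving the centres, still gives a cover.
-/

open Set Pointwise

/-- The covering functional: the smallest `γ ≥ 0` such that `K` can be
covered by `m` translates of `γ • K`. -/
noncomputable def coveringFunctional {n : ℕ} (K : Set (EuclideanSpace ℝ (Fin n))) (m : ℕ) : ℝ :=
  sInf {γ : ℝ | 0 ≤ γ ∧ ∃ x : Fin m → EuclideanSpace ℝ (Fin n),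
    K ⊆ ⋃ i, x i +ᵥ γ • K}

section Convex

variable {E ι κ : Type*} [AddCommGroup E] [Module ℝ E] [Fintype ι]

lemma exists_inv_card_le_of_mem_stdSimplex {l : ι → ℝ} (hl : l ∈ stdSimplex ℝ ι) :
    ∃ i, (Fintype.card ι : ℝ)⁻¹ ≤ l i := by
  have : Nonempty ι := by
    by_contra h
    rw [not_nonempty_iff] at h
    simpa using hl.2
  obtain ⟨i, -, hi⟩ := Finset.exists_le_of_sum_le Finset.univ_nonempty
    (f := fun _ => (Fintype.card ι : ℝ)⁻¹) (g := l) (by simp [hl.2, Fintype.card_ne_zero])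
  exact ⟨i, hi⟩

lemma mem_convexHull_iUnion_iff {K : ι → Set E} (hKne : ∀ i, (K i).Nonempty)
    (hKconv : ∀ i, Convex ℝ (K i)) {x : E} :
    x ∈ convexHull ℝ (⋃ i, K i) ↔
      ∃ l ∈ stdSimplex ℝ ι, ∃ y : ι → E, (∀ i, y i ∈ K i) ∧ ∑ i, l i • y i = x := by
  classical
  refine ⟨fun hx => convexHull_min (t := {x | ∃ l ∈ stdSimplex ℝ ι, ∃ y : ι → E,
    (∀ i, y i ∈ K i) ∧ ∑ i, l i • y i = x}) ?_ ?_ hx, ?_⟩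
  · rintro x ⟨_, ⟨i, rfl⟩, hx⟩
    refine ⟨Pi.single i 1, single_mem_stdSimplex ℝ i,
      Function.update (fun j => (hKne j).some) i x, fun j => ?_, by simp⟩
    rcases eq_or_ne j i with rfl | hj
    · simpa using hx
    · simpa [hj] using (hKne j).some_mem
  · rintro _ ⟨l, hl, y, hy, rfl⟩ _ ⟨l', hl', y', hy', rfl⟩ a b ha hb hab
    have hmem : ∀ i, a • l i • y i + b • l' i • y' i ∈ (a * l i + b * l' i) • K i := by
      intro i
      rw [(hKconv i).add_smul (mul_nonneg ha (hl.1 i)) (mul_nonneg hb (hl'.1 i)), mul_smul,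
        mul_smul]
      exact add_mem_add (smul_mem_smul_set (smul_mem_smul_set (hy i)))
        (smul_mem_smul_set (smul_mem_smul_set (hy' i)))
    choose z hz hz_eq using fun i => mem_smul_set.1 (hmem i)
    refine ⟨a • l + b • l', convex_stdSimplex ℝ ι hl hl' ha hb hab, z, hz, ?_⟩
    simp [hz_eq, Finset.smul_sum, Finset.sum_add_distrib]
  · rintro ⟨l, hl, y, hy, rfl⟩
    exact (convex_convexHull ℝ _).sum_mem (fun i _ => hl.1 i) hl.2
      fun i _ => subset_convexHull ℝ _ (mem_iUnion.2 ⟨i, hy i⟩)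

lemma Convex.sum_smul_mem_smul_set {K : Set E} (hK : Convex ℝ K) (hne : K.Nonempty)
    (s : Finset κ) {c : κ → ℝ} {z : κ → E} (hc : ∀ i ∈ s, 0 ≤ c i) (hz : ∀ i ∈ s, z i ∈ K) :
    ∑ i ∈ s, c i • z i ∈ (∑ i ∈ s, c i) • K := by
  induction s using Finset.cons_induction with
  | empty => simp [zero_smul_set hne]
  | cons a s has ih =>
    simp only [Finset.mem_cons, forall_eq_or_imp] at hc hz
    rw [Finset.sum_cons, Finset.sum_cons, hK.add_smul hc.1 (Finset.sum_nonneg hc.2)]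
    exact add_mem_add (smul_mem_smul_set hz.1) (ih hc.2 hz.2)

lemma Convex.sum_smul_sub_smul_mem {K : Set E} (hK : Convex ℝ K) {l : ι → ℝ}
    (hl : l ∈ stdSimplex ℝ ι) {y : ι → E} (hy : ∀ j, y j ∈ K) {i : ι} {a : ℝ} (hai : a ≤ l i) :
    ∑ j, l j • y j - a • y i ∈ (1 - a) • K := by
  classical
  have hl' : ∀ j ∈ Finset.univ, 0 ≤ (l - Pi.single i a : ι → ℝ) j := by
    intro j _
    rcases eq_or_ne j i with rfl | hj
    · simpa using hai
    · simpa [hj] using hl.1 j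
  simpa [sub_smul, Finset.sum_sub_distrib, hl.2] using
    hK.sum_smul_mem_smul_set ⟨y i, hy i⟩ Finset.univ hl' fun j _ => hy j

lemma Convex.sum_smul_mem_vadd_smul {K : Set E} (hK : Convex ℝ K) {l : ι → ℝ}
    (hl : l ∈ stdSimplex ℝ ι) {y : ι → E} (hy : ∀ j, y j ∈ K) {i : ι} {a : ℝ} (ha : 0 ≤ a)
    (hai : a ≤ l i) {c : E} {g : ℝ} (hg : 0 ≤ g) (hyi : y i ∈ c +ᵥ g • K) :
    ∑ j, l j • y j ∈ a • c +ᵥ (1 - a + a * g) • K := by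
  obtain ⟨_, ⟨w, hw, rfl⟩, hyi⟩ := hyi
  have ha1 : a ≤ 1 := hai.trans (mem_Icc_of_mem_stdSimplex hl i).2
  rw [hK.add_smul (sub_nonneg.2 ha1) (mul_nonneg ha hg)]
  refine ⟨_, add_mem_add (hK.sum_smul_sub_smul_mem hl hy hai) (smul_mem_smul_set hw), ?_⟩
  simp only [← hyi, vadd_eq_add, smul_add, mul_smul]
  abel

theorem convexHull_iUnion_subset_iUnion_vadd_smul {K : ι → Set E}
    (hKne : ∀ i, (K i).Nonempty) (hKconv : ∀ i, Convex ℝ (K i)) {J : ι → Type*}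
    {c : (i : ι) → J i → E} {g : ι → ℝ} (hg : ∀ i, 0 ≤ g i)
    (hc : ∀ i, K i ⊆ ⋃ j, c i j +ᵥ g i • K i) :
    convexHull ℝ (⋃ i, K i) ⊆ ⋃ ij : Σ i, J i,
      (Fintype.card ι : ℝ)⁻¹ • c ij.1 ij.2 +ᵥ
        ((Fintype.card ι - 1 + g ij.1) / Fintype.card ι) • convexHull ℝ (⋃ i, K i) := by
  intro x hx
  obtain ⟨l, hl, y, hy, rfl⟩ := (mem_convexHull_iUnion_iff hKne hKconv).1 hx
  obtain ⟨i, hi⟩ := exists_inv_card_le_of_mem_stdSimplex hl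
  obtain ⟨j, hj⟩ := mem_iUnion.1 (hc i (hy i))
  have hK_sub : ∀ i, K i ⊆ convexHull ℝ (⋃ i, K i) :=
    fun i => (subset_iUnion K i).trans (subset_convexHull ℝ _)
  have hcard : (Fintype.card ι : ℝ) ≠ 0 := by
    have : Nonempty ι := ⟨i⟩
    exact_mod_cast Fintype.card_ne_zero
  refine mem_iUnion.2 ⟨⟨i, j⟩, ?_⟩
  convert (convex_convexHull ℝ _).sum_smul_mem_vadd_smul hl (fun j => hK_sub j (hy j))
    (inv_nonneg.2 (Nat.cast_nonneg _)) hi (hg i) (vadd_set_mono (smul_set_mono (hK_sub i)) hj)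
    using 3
  field_simp

lemma Convex.exists_subset_iUnion_vadd_smul_of_le {J : Type*} {K : Set E} (hK : Convex ℝ K)
    {x : J → E} {s : J → ℝ} {t : ℝ} (hs : ∀ j, 0 ≤ s j) (hst : ∀ j, s j ≤ t)
    (h : K ⊆ ⋃ j, x j +ᵥ s j • K) :
    ∃ x' : J → E, K ⊆ ⋃ j, x' j +ᵥ t • K := by
  rcases K.eq_empty_or_nonempty with rfl | ⟨k, hk⟩
  · exact ⟨x, empty_subset _⟩
  refine ⟨fun j => x j - (t - s j) • k, h.trans (iUnion_mono fun j => ?_)⟩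
  rintro _ ⟨_, ⟨w, hw, rfl⟩, rfl⟩
  have ht : t = s j + (t - s j) := by ring
  refine ⟨s j • w + (t - s j) • k, ?_, ?_⟩
  · rw [ht, hK.add_smul (hs j) (sub_nonneg.2 (hst j)), ← ht]
    exact add_mem_add (smul_mem_smul_set hw) (smul_mem_smul_set hk)
  · simp only [vadd_eq_add]
    abel

end Convex

section CoveringFunctional

variable {n : ℕ}

lemma coveringFunctional_nonneg (K : Set (EuclideanSpace ℝ (Fin n))) (m : ℕ) :
    0 ≤ coveringFunctional K m :=
  Real.sInf_nonneg fun _ hγ => hγ.1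

lemma coveringFunctional_le_of_subset_iUnion {K : Set (EuclideanSpace ℝ (Fin n))} {J : Type*}
    [Fintype J] {t : ℝ} (ht : 0 ≤ t) (x : J → EuclideanSpace ℝ (Fin n)) (h : K ⊆ ⋃ j, x j +ᵥ t • K) :
    coveringFunctional K (Fintype.card J) ≤ t := by
  refine csInf_le ⟨0, fun _ hγ => hγ.1⟩ ⟨ht, x ∘ (Fintype.equivFin J).symm, ?_⟩
  rwa [Function.comp_def, (Fintype.equivFin J).symm.surjective.iUnion_comp (fun j => x j +ᵥ t • K)]

lemma exists_subset_iUnion_vadd_smul_lt_coveringFunctional_add (K : Set (EuclideanSpace ℝ (Fin n)))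
    {m : ℕ} (hm : 0 < m) {ε : ℝ} (hε : 0 < ε) :
    ∃ γ, 0 ≤ γ ∧ γ < coveringFunctional K m + ε ∧
      ∃ x : Fin m → EuclideanSpace ℝ (Fin n), K ⊆ ⋃ i, x i +ᵥ γ • K := by
  have hne : {γ : ℝ | 0 ≤ γ ∧ ∃ x : Fin m → EuclideanSpace ℝ (Fin n),
      K ⊆ ⋃ i, x i +ᵥ γ • K}.Nonempty :=
    ⟨1, zero_le_one, fun _ => 0, fun y hy => mem_iUnion.2 ⟨⟨0, hm⟩, by simpa using hy⟩⟩
  obtain ⟨γ, ⟨hγ, x, hx⟩, hlt⟩ := Real.lt_sInf_add_pos hne hε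
  exact ⟨γ, hγ, hlt, x, hx⟩

end CoveringFunctional

theorem covering_functional_convexHull_le_of_le_general {n p : ℕ}
    (K : Fin p → Set (EuclideanSpace ℝ (Fin n)))
    (hKne : ∀ i, (K i).Nonempty) (hKconv : ∀ i, Convex ℝ (K i))
    (m : Fin p → ℕ) (hm : ∀ i, 0 < m i) :
    coveringFunctional (convexHull ℝ (⋃ i, K i)) (∑ i, m i) ≤
      ⨆ i, ((p : ℝ) - 1 + coveringFunctional (K i) (m i)) / p := by
  set Γ := ⨆ i, ((p : ℝ) - 1 + coveringFunctional (K i) (m i)) / p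
  have hp : ∀ i : Fin p, (1 : ℝ) ≤ p := fun i => by exact_mod_cast i.pos
  have hΓ : ∀ i, ((p : ℝ) - 1 + coveringFunctional (K i) (m i)) / p ≤ Γ :=
    le_ciSup (Finite.bddAbove_range _)
  have hΓ0 : 0 ≤ Γ := Real.iSup_nonneg fun i =>
    div_nonneg (by linarith [hp i, coveringFunctional_nonneg (K i) (m i)]) (by linarith [hp i])
  refine le_of_forall_pos_le_add fun ε hε => ?_
  choose g hg0 hglt c hc using
    fun i => exists_subset_iUnion_vadd_smul_lt_coveringFunctional_add (K i) (hm i) hε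
  have hcover := convexHull_iUnion_subset_iUnion_vadd_smul hKne hKconv hg0 hc
  rw [Fintype.card_fin] at hcover
  have hg_le : ∀ i, ((p : ℝ) - 1 + g i) / p ≤ Γ + ε := fun i => calc
    ((p : ℝ) - 1 + g i) / p ≤ ((p : ℝ) - 1 + coveringFunctional (K i) (m i)) / p + ε / p := by
        rw [← add_div]
        exact div_le_div_of_nonneg_right (by linarith [hglt i]) (by linarith [hp i])
    _ ≤ Γ + ε := add_le_add (hΓ i) (div_le_self hε.le (hp i))
  obtain ⟨d, hd⟩ := (convex_convexHull ℝ _).exists_subset_iUnion_vadd_smul_of_le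
    (s := fun ij : Σ i, Fin (m i) => ((p : ℝ) - 1 + g ij.1) / p) (t := Γ + ε)
    (fun ij => div_nonneg (by linarith [hp ij.1, hg0 ij.1]) (by linarith [hp ij.1]))
    (fun ij => hg_le ij.1) hcover
  have hcard : ∑ i, m i = Fintype.card (Σ i, Fin (m i)) := by simp
  rw [hcard]
  exact coveringFunctional_le_of_subset_iUnion (by linarith) d hd

theorem covering_functional_convexHull_le_of_le {n p : ℕ} (hp : 0 < p) (hpn : p ≤ n + 1)
    (K : Fin p → Set (EuclideanSpace ℝ (Fin n)))
    (hKne : ∀ i, (K i).Nonempty) (hKc : ∀ i, IsCompact (K i)) (hKconv : ∀ i, Convex ℝ (K i))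
    (hint : (interior (convexHull ℝ (⋃ i, K i))).Nonempty)
    (m : Fin p → ℕ) (hm : ∀ i, 0 < m i) :
    coveringFunctional (convexHull ℝ (⋃ i, K i)) (∑ i, m i) ≤
      ⨆ i, ((p : ℝ) - 1 + coveringFunctional (K i) (m i)) / p :=
  covering_functional_convexHull_le_of_le_general K hKne hKconv m hm
end

section
/- If K = conv(L ∪ M) is a convex body in ℝ^n, where L and M are nonempty compact convex sets, then for all positive integers m₁, m₂, Γ_{m₁+m₂}(K) ≤ max{(1+Γ_{m₁}(L))/2, (1+Γ_{m₂}(M))/2}. -/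
open Set Pointwise

/-!
Every point of `K = conv(L ∪ M)` lies on a segment `[l, m]` with `l ∈ L`, `m ∈ M`, and is therefore
the midpoint of `l` and a point of `K`, or of `m` and a point of `K`. Halving a cover of `L` by
`m₁` translates of `γ₁ L` covers the midpoints `(l + K) / 2` by `m₁` translates of
`(γ₁ / 2) L + K / 2 ⊆ ((1 + γ₁) / 2) K`, and likewise for `M`; together these are `m₁ + m₂`
translates covering `K`.
-/

theorem Fin.iUnion_append {α β : Type*} {m₁ m₂ : ℕ} (f : α → Set β) (y : Fin m₁ → α)
    (z : Fin m₂ → α) : ⋃ i, f (Fin.append y z i) = (⋃ i, f (y i)) ∪ ⋃ j, f (z j) := by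
  ext
  simp only [mem_iUnion, mem_union]
  constructor
  · rintro ⟨i, hi⟩
    induction i using Fin.addCases with
    | left i => exact .inl ⟨i, by rwa [Fin.append_left] at hi⟩
    | right j => exact .inr ⟨j, by rwa [Fin.append_right] at hi⟩
  · rintro (⟨i, hi⟩ | ⟨j, hj⟩)
    exacts [⟨_, by rwa [Fin.append_left]⟩, ⟨_, by rwa [Fin.append_right]⟩]

theorem Real.le_max_sInf_of_forall_le_max {S T : Set ℝ} (hS : S.Nonempty) (hT : T.Nonempty)
    {c : ℝ} (h : ∀ s ∈ S, ∀ t ∈ T, c ≤ max s t) : c ≤ max (sInf S) (sInf T) := by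
  refine le_of_forall_pos_lt_add fun ε hε => ?_
  obtain ⟨s, hs, hsε⟩ := Real.lt_sInf_add_pos hS hε
  obtain ⟨t, ht, htε⟩ := Real.lt_sInf_add_pos hT hε
  calc c ≤ max s t := h s hs t ht
    _ < max (sInf S) (sInf T) + ε := by
      rw [← max_add_add_right]
      exact max_lt_max hsε htε

section Covering

variable {E : Type*} [AddCommGroup E] [Module ℝ E]

def coveringFactors (K : Set E) (m : ℕ) : Set ℝ :=
  {γ | 0 ≤ γ ∧ ∃ x : Fin m → E, K ⊆ ⋃ i, x i +ᵥ γ • K}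

theorem coveringFunctional_eq_sInf {n : ℕ} (K : Set (EuclideanSpace ℝ (Fin n))) (m : ℕ) :
    coveringFunctional K m = sInf (coveringFactors K m) :=
  rfl

theorem one_mem_coveringFactors (K : Set E) {m : ℕ} (hm : 0 < m) : 1 ∈ coveringFactors K m :=
  ⟨zero_le_one, fun _ => 0, fun k hk => mem_iUnion.2 ⟨⟨0, hm⟩, by simpa using hk⟩⟩

theorem bddBelow_coveringFactors (K : Set E) (m : ℕ) : BddBelow (coveringFactors K m) :=
  ⟨0, fun _ hγ => hγ.1⟩

theorem Convex.smul_subset_vadd_smul {K : Set E} (hK : Convex ℝ K) {p : E} (hp : p ∈ K)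
    {γ γ' : ℝ} (hγ' : 0 ≤ γ') (hγ : γ' ≤ γ) : γ' • K ⊆ -((γ - γ') • p) +ᵥ γ • K := by
  intro z hz
  have hmem : z + (γ - γ') • p ∈ γ • K := by
    have hsplit : γ • K = γ' • K + (γ - γ') • K := by
      rw [← hK.add_smul hγ' (sub_nonneg.2 hγ), add_sub_cancel]
    rw [hsplit]
    exact add_mem_add hz (smul_mem_smul_set hp)
  exact ⟨_, hmem, by simp [vadd_eq_add]⟩

theorem Convex.half_smul_add_half_smul_subset_iUnion {ι : Type*} {K L : Set E}
    (hK : Convex ℝ K) (hLK : L ⊆ K) {γ : ℝ} (hγ : 0 ≤ γ) {x : ι → E}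
    (hx : L ⊆ ⋃ i, x i +ᵥ γ • L) :
    (1 / 2 : ℝ) • L + (1 / 2 : ℝ) • K ⊆ ⋃ i, (1 / 2 : ℝ) • x i +ᵥ ((1 + γ) / 2) • K := by
  rintro _ ⟨_, ⟨l, hl, rfl⟩, _, ⟨w, hw, rfl⟩, rfl⟩
  obtain ⟨i, _, ⟨l', hl', rfl⟩, rfl⟩ := mem_iUnion.1 (hx hl)
  have hmem : (γ / 2) • l' + (1 / 2 : ℝ) • w ∈ ((1 + γ) / 2) • K := by
    rw [show (1 + γ) / 2 = γ / 2 + 1 / 2 by ring, hK.add_smul (by positivity) (by positivity)]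
    exact add_mem_add (smul_mem_smul_set (hLK hl')) (smul_mem_smul_set hw)
  refine mem_iUnion.2 ⟨i, _, hmem, ?_⟩
  simp only [vadd_eq_add]
  module

theorem Convex.exists_half_smul_add_half_smul_subset_iUnion {K L : Set E} (hK : Convex ℝ K)
    (hLK : L ⊆ K) {p : E} (hp : p ∈ K) {m : ℕ} {γ₁ γ : ℝ} (hγ₁ : γ₁ ∈ coveringFactors L m)
    (hγ : (1 + γ₁) / 2 ≤ γ) :
    ∃ y : Fin m → E, (1 / 2 : ℝ) • L + (1 / 2 : ℝ) • K ⊆ ⋃ i, y i +ᵥ γ • K := by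
  obtain ⟨hγ₁0, x, hx⟩ := hγ₁
  refine ⟨fun i => (1 / 2 : ℝ) • x i + -((γ - (1 + γ₁) / 2) • p), ?_⟩
  refine (hK.half_smul_add_half_smul_subset_iUnion hLK hγ₁0 hx).trans (iUnion_mono fun i => ?_)
  rw [← vadd_vadd]
  exact vadd_set_mono (hK.smul_subset_vadd_smul hp (by positivity) hγ)

theorem Convex.add_smul_mem_half_smul_add_half_smul {K L : Set E} (hK : Convex ℝ K)
    (hLK : L ⊆ K) {l w : E} (hl : l ∈ L) (hw : w ∈ K) {a b : ℝ} (hb : 0 ≤ b) (hab : a + b = 1)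
    (hb2 : b ≤ 1 / 2) : a • l + b • w ∈ (1 / 2 : ℝ) • L + (1 / 2 : ℝ) • K := by
  have hw' : (2 * a - 1) • l + (2 * b) • w ∈ K :=
    hK (hLK hl) hw (by linarith) (by linarith) (by linarith)
  convert add_mem_add (smul_mem_smul_set hl) (smul_mem_smul_set hw') using 1
  module

theorem Convex.convexJoin_subset_half_smul_add_half_smul_union {K L M : Set E}
    (hK : Convex ℝ K) (hLK : L ⊆ K) (hMK : M ⊆ K) :
    convexJoin ℝ L M ⊆
      ((1 / 2 : ℝ) • L + (1 / 2 : ℝ) • K) ∪ ((1 / 2 : ℝ) • M + (1 / 2 : ℝ) • K) := by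
  intro x hx
  obtain ⟨l, hl, m, hm, a, b, ha, hb, hab, rfl⟩ := mem_convexJoin.1 hx
  rcases le_total b (1 / 2) with hb2 | hb2
  · exact .inl (hK.add_smul_mem_half_smul_add_half_smul hLK hl (hMK hm) hb hab hb2)
  · rw [add_comm (a • l)]
    exact .inr (hK.add_smul_mem_half_smul_add_half_smul hMK hm (hLK hl) ha (by linarith)
      (by linarith))

theorem Convex.one_add_max_div_two_mem_coveringFactors_convexHull_union {L M : Set E}
    (hL : Convex ℝ L) (hM : Convex ℝ M) (hLne : L.Nonempty) (hMne : M.Nonempty)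
    {m₁ m₂ : ℕ} {γ₁ γ₂ : ℝ} (hγ₁ : γ₁ ∈ coveringFactors L m₁) (hγ₂ : γ₂ ∈ coveringFactors M m₂) :
    (1 + max γ₁ γ₂) / 2 ∈ coveringFactors (convexHull ℝ (L ∪ M)) (m₁ + m₂) := by
  set K := convexHull ℝ (L ∪ M)
  have hK : Convex ℝ K := convex_convexHull ℝ _
  have hLK : L ⊆ K := subset_union_left.trans (subset_convexHull ℝ _)
  have hMK : M ⊆ K := subset_union_right.trans (subset_convexHull ℝ _)
  obtain ⟨p, hp⟩ := hLne.mono hLK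
  obtain ⟨y, hy⟩ := hK.exists_half_smul_add_half_smul_subset_iUnion hLK hp hγ₁
    (γ := (1 + max γ₁ γ₂) / 2) (by gcongr; exact le_max_left _ _)
  obtain ⟨z, hz⟩ := hK.exists_half_smul_add_half_smul_subset_iUnion hMK hp hγ₂
    (γ := (1 + max γ₁ γ₂) / 2) (by gcongr; exact le_max_right _ _)
  refine ⟨by linarith [hγ₁.1, le_max_left γ₁ γ₂], Fin.append y z, ?_⟩
  calc K = convexJoin ℝ L M := hL.convexHull_union hM hLne hMne
    _ ⊆ ((1 / 2 : ℝ) • L + (1 / 2 : ℝ) • K) ∪ ((1 / 2 : ℝ) • M + (1 / 2 : ℝ) • K) :=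
      hK.convexJoin_subset_half_smul_add_half_smul_union hLK hMK
    _ ⊆ _ := by
      rw [Fin.iUnion_append fun v => v +ᵥ ((1 + max γ₁ γ₂) / 2) • K]
      exact union_subset_union hy hz

end Covering

theorem covering_functional_convexHull_union_general {n : ℕ}
    (L M : Set (EuclideanSpace ℝ (Fin n)))
    (hLne : L.Nonempty) (hLconv : Convex ℝ L)
    (hMne : M.Nonempty) (hMconv : Convex ℝ M)
    (m₁ m₂ : ℕ) (hm₁ : 0 < m₁) (hm₂ : 0 < m₂) :
    coveringFunctional (convexHull ℝ (L ∪ M)) (m₁ + m₂) ≤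
      max ((1 + coveringFunctional L m₁) / 2) ((1 + coveringFunctional M m₂) / 2) := by
  simp only [coveringFunctional_eq_sInf]
  rw [max_div_div_right zero_le_two, max_add_add_left]
  have hfactor : ∀ s ∈ coveringFactors L m₁, ∀ t ∈ coveringFactors M m₂,
      2 * sInf (coveringFactors (convexHull ℝ (L ∪ M)) (m₁ + m₂)) - 1 ≤ max s t :=
    fun s hs t ht => by
      have := csInf_le (bddBelow_coveringFactors _ _)
        (hLconv.one_add_max_div_two_mem_coveringFactors_convexHull_union hMconv hLne hMne hs ht)
      linarith
  have := Real.le_max_sInf_of_forall_le_max ⟨1, one_mem_coveringFactors L hm₁⟩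
    ⟨1, one_mem_coveringFactors M hm₂⟩ hfactor
  linarith

theorem covering_functional_convexHull_union {n : ℕ}
    (L M : Set (EuclideanSpace ℝ (Fin n)))
    (hLne : L.Nonempty) (hLc : IsCompact L) (hLconv : Convex ℝ L)
    (hMne : M.Nonempty) (hMc : IsCompact M) (hMconv : Convex ℝ M)
    (hint : (interior (convexHull ℝ (L ∪ M))).Nonempty)
    (m₁ m₂ : ℕ) (hm₁ : 0 < m₁) (hm₂ : 0 < m₂) :
    coveringFunctional (convexHull ℝ (L ∪ M)) (m₁ + m₂) ≤
      max ((1 + coveringFunctional L m₁) / 2) ((1 + coveringFunctional M m₂) / 2) :=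
  covering_functional_convexHull_union_general L M hLne hLconv hMne hMconv m₁ m₂ hm₁ hm₂
end

section
/- If a convex body K ⊆ ℝ^n is the convex hull of p line segments K₁,...,K_p, then Γ_{2p}(K) ≤ (2p−1)/(2p). -/
/-!
Write `K = conv {v₁, …, v_m}` with `m = 2p` (the endpoints of the segments). A point
`x = ∑ μᵢ vᵢ` of `K` has some weight `μⱼ ≥ 1/m`; moving the mass `1/m` off `vⱼ` leaves a point of
`(1 - 1/m) • K`, so `x ∈ (1/m) vⱼ + (1 - 1/m) K`. Hence `m` homothetic copies of ratio
`(m - 1)/m` cover `K`.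
-/

open Set Pointwise

theorem Fin.range_append {α : Type*} {m k : ℕ} (a : Fin m → α) (b : Fin k → α) :
    range (Fin.append a b) = range a ∪ range b := by
  ext x
  constructor
  · rintro ⟨i, rfl⟩
    induction i using Fin.addCases <;> simp
  · rintro (⟨i, rfl⟩ | ⟨i, rfl⟩)
    exacts [⟨Fin.castAdd k i, Fin.append_left a b i⟩, ⟨Fin.natAdd m i, Fin.append_right a b i⟩]

section ConvexHull

variable {ι E : Type*} [AddCommGroup E] [Module ℝ E]

theorem convexHull_iUnion_segment (a b : ι → E) :
    convexHull ℝ (⋃ i, segment ℝ (a i) (b i)) = convexHull ℝ (range a ∪ range b) := by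
  apply le_antisymm
  · refine convexHull_min (iUnion_subset fun i => ?_) (convex_convexHull ℝ _)
    exact segment_subset_convexHull (subset_union_left (mem_range_self i))
      (subset_union_right (mem_range_self i))
  · refine convexHull_mono (union_subset ?_ ?_) <;> rintro _ ⟨i, rfl⟩ <;>
      refine mem_iUnion.2 ⟨i, ?_⟩
    exacts [left_mem_segment ℝ _ _, right_mem_segment ℝ _ _]

variable [Fintype ι]

theorem exists_sum_smul_eq_of_mem_convexHull_range {v : ι → E} {x : E}
    (hx : x ∈ convexHull ℝ (range v)) :
    ∃ μ : ι → ℝ, (∀ i, 0 ≤ μ i) ∧ ∑ i, μ i = 1 ∧ ∑ i, μ i • v i = x := by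
  classical
  rw [convexHull_range_eq_exists_affineCombination] at hx
  obtain ⟨s, w, hw₀, hw₁, rfl⟩ := hx
  refine ⟨fun i => if i ∈ s then w i else 0, fun i => ?_, ?_, ?_⟩
  · dsimp only
    split_ifs with hi
    exacts [hw₀ i hi, le_rfl]
  · rw [Finset.sum_ite_mem, Finset.univ_inter, hw₁]
  · simp only [ite_smul, zero_smul, Finset.sum_ite_mem, Finset.univ_inter,
      s.affineCombination_eq_linear_combination v w hw₁]

theorem exists_inv_card_le_of_sum_eq_one [Nonempty ι] {μ : ι → ℝ} (hμ : ∑ i, μ i = 1) :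
    ∃ j, 1 / (Fintype.card ι : ℝ) ≤ μ j := by
  have hsum : ∑ _i : ι, 1 / (Fintype.card ι : ℝ) ≤ ∑ i, μ i := by
    rw [Finset.sum_const, Finset.card_univ, nsmul_eq_mul, mul_one_div_cancel (by positivity), hμ]
  obtain ⟨j, -, hj⟩ := Finset.exists_le_of_sum_le Finset.univ_nonempty hsum
  exact ⟨j, hj⟩

theorem sum_smul_mem_vadd_smul_convexHull_range {v : ι → E} {μ : ι → ℝ} (hμ₀ : ∀ i, 0 ≤ μ i)
    (hμ₁ : ∑ i, μ i = 1) {j : ι} {t : ℝ} (htj : t ≤ μ j) (ht : t < 1) :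
    ∑ i, μ i • v i ∈ t • v j +ᵥ (1 - t) • convexHull ℝ (range v) := by
  classical
  set w : ι → ℝ := fun i => μ i - if i = j then t else 0 with hw
  have hw₀ : ∀ i ∈ Finset.univ, 0 ≤ w i := by
    intro i _
    by_cases hij : i = j
    · simp [hw, hij, htj]
    · simpa [hw, hij] using hμ₀ i
  have hw₁ : ∑ i, w i = 1 - t := by simp [hw, Finset.sum_sub_distrib, hμ₁]
  have hwv : ∑ i, w i • v i = ∑ i, μ i • v i - t • v j := by
    simp [hw, sub_smul, Finset.sum_sub_distrib, ite_smul]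
  have hcenter : Finset.univ.centerMass w v ∈ convexHull ℝ (range v) :=
    Finset.univ.centerMass_mem_convexHull hw₀ (by rw [hw₁]; linarith)
      fun i _ => mem_range_self i
  have hx : ∑ i, μ i • v i = t • v j +ᵥ (1 - t) • Finset.univ.centerMass w v := by
    rw [Finset.centerMass, hw₁, smul_inv_smul₀ (by linarith), hwv, vadd_eq_add, add_sub_cancel]
  rw [hx]
  exact vadd_mem_vadd_set (smul_mem_smul_set hcenter)

theorem convexHull_range_subset_iUnion_vadd_smul (hι : 1 < Fintype.card ι) (v : ι → E) :
    convexHull ℝ (range v) ⊆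
      ⋃ j, (1 / Fintype.card ι : ℝ) • v j +ᵥ
        (1 - 1 / Fintype.card ι : ℝ) • convexHull ℝ (range v) := by
  intro x hx
  have : Nonempty ι := Fintype.card_pos_iff.1 (by omega)
  obtain ⟨μ, hμ₀, hμ₁, rfl⟩ := exists_sum_smul_eq_of_mem_convexHull_range hx
  obtain ⟨j, hj⟩ := exists_inv_card_le_of_sum_eq_one hμ₁
  have hcard : (1 : ℝ) < Fintype.card ι := by exact_mod_cast hι
  exact mem_iUnion.2 ⟨j, sum_smul_mem_vadd_smul_convexHull_range hμ₀ hμ₁ hj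
    ((div_lt_one (by linarith)).2 hcard)⟩

end ConvexHull

theorem coveringFunctional_le {n m : ℕ} {K : Set (EuclideanSpace ℝ (Fin n))} {γ : ℝ} (hγ : 0 ≤ γ)
    (x : Fin m → EuclideanSpace ℝ (Fin n)) (hK : K ⊆ ⋃ i, x i +ᵥ γ • K) :
    coveringFunctional K m ≤ γ :=
  csInf_le ⟨0, fun _ h => h.1⟩ ⟨hγ, x, hK⟩

theorem coveringFunctional_convexHull_range_le {n m : ℕ} (hm : 1 < m)
    (v : Fin m → EuclideanSpace ℝ (Fin n)) :
    coveringFunctional (convexHull ℝ (range v)) m ≤ (m - 1) / m := by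
  have hm' : (1 : ℝ) < m := by exact_mod_cast hm
  have hratio : (m - 1) / m = 1 - 1 / (m : ℝ) := by field_simp
  have hcover := convexHull_range_subset_iUnion_vadd_smul (by simpa using hm) v
  rw [Fintype.card_fin, ← hratio] at hcover
  exact coveringFunctional_le (div_nonneg (by linarith) (by linarith)) _ hcover

theorem covering_functional_convexHull_segments_general {n p : ℕ} (hp : 0 < p)
    (a b : Fin p → EuclideanSpace ℝ (Fin n))
    (K : Set (EuclideanSpace ℝ (Fin n)))
    (hK : K = convexHull ℝ (⋃ i, segment ℝ (a i) (b i))) :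
    coveringFunctional K (2 * p) ≤ (2 * (p : ℝ) - 1) / (2 * p) := by
  rw [hK, convexHull_iUnion_segment, ← Fin.range_append, two_mul p]
  have := coveringFunctional_convexHull_range_le (by omega) (Fin.append a b)
  push_cast at this
  rwa [two_mul]

theorem covering_functional_convexHull_segments {n p : ℕ} (hp : 0 < p)
    (a b : Fin p → EuclideanSpace ℝ (Fin n))
    (K : Set (EuclideanSpace ℝ (Fin n)))
    (hK : K = convexHull ℝ (⋃ i, segment ℝ (a i) (b i)))
    (hKbody : (interior K).Nonempty) :
    coveringFunctional K (2 * p) ≤ (2 * (p : ℝ) - 1) / (2 * p) :=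
  covering_functional_convexHull_segments_general hp a b K hK
end

section
/- Let K be a convex body in ℝ^n and x, y ∈ ∂K. If x and y are not antipodal points of K, then there exists a nonzero vector d such that both x+d and y+d lie in the interior of K. -/
open Set Pointwise

/-- `a` and `b` are antipodal points of `X`: there are distinct parallel hyperplanes
through `a` and `b` such that `X` lies in the closed slab between them. -/
def AntipodalPair {n : ℕ} (X : Set (EuclideanSpace ℝ (Fin n)))
    (a b : EuclideanSpace ℝ (Fin n)) : Prop :=
  ∃ f : EuclideanSpace ℝ (Fin n) →ₗ[ℝ] ℝ, f ≠ 0 ∧ f a ≠ f b ∧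
    ∀ x ∈ X, min (f a) (f b) ≤ f x ∧ f x ≤ max (f a) (f b)

/-!
If no common nonzero translation moves both `x` and `y` into the interior of `K`, then the open
convex sets `interior K - x` and `interior K - y` are disjoint (`0` lies in neither, as `x` is a
boundary point). A functional `f` separating them has separating level `0`, since `0` lies in the
closure of both; so `f y < f < f x` on the interior of `K`, and `K` lies in the slab between the
hyperplanes `f = f y` and `f = f x`.
-/

section Separation

variable {E : Type*} [TopologicalSpace E] [AddCommGroup E] [Module ℝ E]
  [IsTopologicalAddGroup E] [ContinuousSMul ℝ E] {K : Set E} {x y : E}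

theorem Convex.exists_strongDual_strictly_between_of_disjoint (hK : Convex ℝ K)
    (hx : x ∈ closure (interior K)) (hy : y ∈ closure (interior K))
    (hdisj : Disjoint ((x + ·) ⁻¹' interior K) ((y + ·) ⁻¹' interior K)) :
    ∃ f : StrongDual ℝ E, ∀ w ∈ interior K, f y < f w ∧ f w < f x := by
  obtain ⟨f, u, hfx, hfy⟩ := geometric_hahn_banach_open_open
    (hK.interior.translate_preimage_right x) (isOpen_interior.preimage (continuous_const_add x))
    (hK.interior.translate_preimage_right y) (isOpen_interior.preimage (continuous_const_add y))
    hdisj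
  have below : ∀ w ∈ interior K, f w - f x < u := fun w hw =>
    by simpa using hfx (w - x) (by simpa using hw)
  have above : ∀ w ∈ interior K, u < f w - f y := fun w hw =>
    by simpa using hfy (w - y) (by simpa using hw)
  have hu_nonneg : 0 ≤ u := by
    simpa using le_on_closure (fun w hw => (below w hw).le) (by fun_prop) (by fun_prop) hx
  have hu_nonpos : u ≤ 0 := by
    simpa using le_on_closure (fun w hw => (above w hw).le) (by fun_prop) (by fun_prop) hy
  refine ⟨f, fun w hw => ⟨?_, ?_⟩⟩
  · linarith [above w hw]
  · linarith [below w hw]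

end Separation

theorem antipodalPair_of_forall_mem_interior_strictly_between {n : ℕ}
    {K : Set (EuclideanSpace ℝ (Fin n))} (hK : Convex ℝ K) (hint : (interior K).Nonempty)
    {x y : EuclideanSpace ℝ (Fin n)} (f : StrongDual ℝ (EuclideanSpace ℝ (Fin n)))
    (hf : ∀ w ∈ interior K, f y < f w ∧ f w < f x) :
    AntipodalPair K x y := by
  obtain ⟨z, hz⟩ := hint
  have hyx : f y < f x := (hf z hz).1.trans (hf z hz).2
  have hclosure : K ⊆ closure (interior K) := by
    rw [hK.closure_interior_eq_closure_of_nonempty_interior ⟨z, hz⟩]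
    exact subset_closure
  refine ⟨f.toLinearMap, fun hf0 => hyx.ne' (by simp [← ContinuousLinearMap.coe_coe, hf0]),
    hyx.ne', fun w hw => ?_⟩
  change min (f x) (f y) ≤ f w ∧ f w ≤ max (f x) (f y)
  rw [min_eq_right hyx.le, max_eq_left hyx.le]
  exact ⟨le_on_closure (fun v hv => (hf v hv).1.le) (by fun_prop) (by fun_prop) (hclosure hw),
    le_on_closure (fun v hv => (hf v hv).2.le) (by fun_prop) (by fun_prop) (hclosure hw)⟩

theorem illuminate_of_not_antipodal_general {n : ℕ} (K : Set (EuclideanSpace ℝ (Fin n)))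
    (hKconv : Convex ℝ K) (hint : (interior K).Nonempty)
    (x y : EuclideanSpace ℝ (Fin n)) (hx : x ∈ frontier K) (hy : y ∈ frontier K)
    (h : ¬ AntipodalPair K x y) :
    ∃ d : EuclideanSpace ℝ (Fin n), d ≠ 0 ∧ x + d ∈ interior K ∧ y + d ∈ interior K := by
  by_contra! hno
  have hdisj : Disjoint ((x + ·) ⁻¹' interior K) ((y + ·) ⁻¹' interior K) :=
    Set.disjoint_left.2 fun d hdx hdy =>
      hno d (by rintro rfl; exact hx.2 (by simpa using hdx)) hdx hdy
  have hcl := hKconv.closure_interior_eq_closure_of_nonempty_interior hint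
  obtain ⟨f, hf⟩ := hKconv.exists_strongDual_strictly_between_of_disjoint
    (hcl ▸ frontier_subset_closure hx) (hcl ▸ frontier_subset_closure hy) hdisj
  exact h (antipodalPair_of_forall_mem_interior_strictly_between hKconv hint f hf)

theorem illuminate_of_not_antipodal {n : ℕ} (K : Set (EuclideanSpace ℝ (Fin n)))
    (hKc : IsCompact K) (hKconv : Convex ℝ K) (hint : (interior K).Nonempty)
    (x y : EuclideanSpace ℝ (Fin n)) (hx : x ∈ frontier K) (hy : y ∈ frontier K)
    (h : ¬ AntipodalPair K x y) :
    ∃ d : EuclideanSpace ℝ (Fin n), d ≠ 0 ∧ x + d ∈ interior K ∧ y + d ∈ interior K :=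
  illuminate_of_not_antipodal_general K hKconv hint x y hx hy h
end

section
/- Let K ∈ 𝒦³ be the convex hull of two parallelograms L and M with c(K) = 8 and suppose the extreme points of K are exactly the 8 vertices of L and M. Then every pair of these 8 extreme points is antipodal in K. -/
open Set Pointwise

/-- `c(K)`: the least number of smaller homothetic copies of `K` needed to cover `K`. -/
noncomputable def coveringNumber {n : ℕ} (K : Set (EuclideanSpace ℝ (Fin n))) : ℕ :=
  sInf {m : ℕ | ∃ (x : Fin m → EuclideanSpace ℝ (Fin n)) (l : Fin m → ℝ),
    (∀ i, l i ∈ Set.Ioo (0 : ℝ) 1) ∧ K ⊆ ⋃ i, x i +ᵥ l i • K}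

/-- A (possibly non-coordinate-planar) parallelogram in Euclidean space. -/
def IsParallelogram {n : ℕ} (L : Set (EuclideanSpace ℝ (Fin n))) : Prop :=
  ∃ (c u v : EuclideanSpace ℝ (Fin n)), LinearIndependent ℝ ![u, v] ∧
    L = (fun p : ℝ × ℝ => c + p.1 • u + p.2 • v) '' (Set.Icc 0 1 ×ˢ Set.Icc 0 1)

/-!
`K` is the convex hull of a set `t` of at most eight points (the vertices of `L` and `M`), and its
extreme points lie in `t`. Let `a ≠ b` be two of them. If `a - b` lies on the boundary of the
difference body `K - K`, a supporting functional there puts `K` in a slab between hyperplanes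
through `a` and `b`. Otherwise `p - q = (1 + δ) (a - b)` for some `p, q ∈ K` and `δ > 0`. In a
convex combination of `t` some vertex `y` has weight at least `1/8`, so `K` is covered by the
homothets `y/8 + (7/8) K`, `y ∈ t`; with `η = 1/(8(1 + δ))` the two at `a` and `b` both lie in
`(a/8 - η p) + (η + 7/8) K`, leaving a cover by seven smaller homothets, contrary to `c(K) = 8`.
-/

open Topology

section ConvexGeometry

variable {E : Type*} [AddCommGroup E] [Module ℝ E]

/-- Some vertex carries weight at least `θ` in any convex combination representing `x`. -/
lemma Finset.exists_mem_vadd_smul_convexHull {t : Finset E} {θ : ℝ} (hθ : θ < 1)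
    (hθt : t.card * θ ≤ 1) {x : E} (hx : x ∈ convexHull ℝ (t : Set E)) :
    ∃ y ∈ t, x ∈ θ • y +ᵥ (1 - θ) • convexHull ℝ (t : Set E) := by
  classical
  obtain ⟨w, hw₀, hw₁, rfl⟩ := Finset.mem_convexHull.1 hx
  have ht : t.Nonempty := Finset.nonempty_of_sum_ne_zero (by rw [hw₁]; exact one_ne_zero)
  obtain ⟨y, hyt, hθy⟩ : ∃ y ∈ t, θ ≤ w y :=
    Finset.exists_le_of_sum_le ht (by simpa [hw₁, nsmul_eq_mul] using hθt)
  have hθ' : 0 < 1 - θ := by linarith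
  let w' : E → ℝ := fun z => (w z - if z = y then θ else 0) / (1 - θ)
  have hw'₀ : ∀ z ∈ t, 0 ≤ w' z := by
    intro z hz
    refine div_nonneg ?_ hθ'.le
    split_ifs with h
    · subst h
      linarith
    · simpa using hw₀ z hz
  have hw'₁ : ∑ z ∈ t, w' z = 1 := by
    simp only [w', ← Finset.sum_div, Finset.sum_sub_distrib, hw₁, Finset.sum_ite_eq',
      if_pos hyt]
    exact div_self hθ'.ne'
  refine ⟨y, hyt, (1 - θ) • t.centerMass w' id,
    smul_mem_smul_set (Finset.centerMass_mem_convexHull t hw'₀ (by rw [hw'₁]; exact one_pos)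
      fun z hz => hz), ?_⟩
  rw [Finset.centerMass_eq_of_sum_1 _ _ hw'₁, Finset.centerMass_eq_of_sum_1 _ _ hw₁]
  simp only [w', div_eq_inv_mul, mul_smul, ← Finset.smul_sum, smul_smul,
    mul_inv_cancel₀ hθ'.ne', one_smul, sub_smul, Finset.sum_sub_distrib, ite_smul, zero_smul,
    Finset.sum_ite_eq', if_pos hyt, id, vadd_eq_add]
  abel

lemma Convex.vadd_smul_subset_vadd_smul {K : Set E} (hK : Convex ℝ K) {p : E} (hp : p ∈ K)
    {η l : ℝ} (hη : 0 ≤ η) (hl : 0 ≤ l) (y : E) :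
    y +ᵥ l • K ⊆ (y - η • p) +ᵥ (η + l) • K := by
  rintro _ ⟨_, ⟨k, hk, rfl⟩, rfl⟩
  refine ⟨η • p + l • k, ?_, ?_⟩
  · rw [hK.add_smul hη hl]
    exact add_mem_add (smul_mem_smul_set hp) (smul_mem_smul_set hk)
  · simp only [vadd_eq_add]
    abel

variable [TopologicalSpace E]

lemma exists_one_add_smul_mem_of_mem_interior [ContinuousSMul ℝ E] {S : Set E} {v : E}
    (hv : v ∈ interior S) : ∃ δ : ℝ, 0 < δ ∧ (1 + δ) • v ∈ S := by
  have hcont : Continuous fun δ : ℝ => (1 + δ) • v := by fun_prop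
  have hnear : ∀ᶠ δ in 𝓝 (0 : ℝ), (1 + δ) • v ∈ interior S :=
    hcont.continuousAt.preimage_mem_nhds (by simpa using isOpen_interior.mem_nhds hv)
  obtain ⟨δ, hδS, hδ⟩ :=
    ((hnear.filter_mono nhdsWithin_le_nhds).and (self_mem_nhdsWithin (s := Ioi 0))).exists
  exact ⟨δ, hδ, interior_subset hδS⟩

lemma exists_pos_forall_le_of_notMem_interior [IsTopologicalAddGroup E] [ContinuousSMul ℝ E]
    {S : Set E} (hS : Convex ℝ S) (h₀ : 0 ∈ interior S) {v : E} (hv : v ∉ interior S) :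
    ∃ f : StrongDual ℝ E, 0 < f v ∧ ∀ x ∈ S, f x ≤ f v := by
  obtain ⟨f, hf⟩ := geometric_hahn_banach_open_point hS.interior isOpen_interior hv
  refine ⟨f, by simpa using hf 0 h₀, fun x hx => ?_⟩
  have hclosure : S ⊆ closure (interior S) := by
    rw [hS.closure_interior_eq_closure_of_nonempty_interior ⟨0, h₀⟩]
    exact subset_closure
  exact closure_minimal (fun y hy => (hf y hy).le) (isClosed_Iic.preimage f.continuous)
    (hclosure hx)

end ConvexGeometry

section Euclidean

variable {n : ℕ}

local notation "E" => EuclideanSpace ℝ (Fin n)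

lemma IsParallelogram.exists_finset_card_le_four_eq_convexHull {L : Set E}
    (hL : IsParallelogram L) : ∃ t : Finset E, t.card ≤ 4 ∧ L = convexHull ℝ ↑t := by
  obtain ⟨c, u, v, -, rfl⟩ := hL
  let g := (LinearMap.fst ℝ ℝ ℝ).smulRight u + (LinearMap.snd ℝ ℝ ℝ).smulRight v
  have hsquare : Icc (0 : ℝ) 1 ×ˢ Icc (0 : ℝ) 1 = convexHull ℝ ({0, 1} ×ˢ {0, 1}) := by
    rw [convexHull_prod, convexHull_pair, segment_eq_Icc zero_le_one]
  have himage : (fun p : ℝ × ℝ => c + p.1 • u + p.2 • v) = (c +ᵥ ·) ∘ g := by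
    ext p
    simp [g, add_assoc]
  refine ⟨{c, c + u, c + u + v, c + v}, Finset.card_le_four, ?_⟩
  rw [himage, image_comp, hsquare, g.image_convexHull, image_vadd, ← convexHull_vadd,
    ← image_vadd, image_image]
  congr 1
  simp [Set.insert_prod, Set.singleton_prod, Set.image_insert_eq, g, add_assoc, Set.insert_comm]

lemma antipodalPair_of_forall_sub_le {K : Set E} {a b : E} (f : E →ₗ[ℝ] ℝ) (ha : a ∈ K)
    (hb : b ∈ K) (hab : 0 < f (a - b)) (hf : ∀ u ∈ K - K, f u ≤ f (a - b)) :
    AntipodalPair K a b := by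
  have hax := fun x (hx : x ∈ K) => hf (a - x) (sub_mem_sub ha hx)
  have hxb := fun x (hx : x ∈ K) => hf (x - b) (sub_mem_sub hx hb)
  simp only [map_sub] at hab hax hxb
  refine ⟨f, fun h => by simp [h] at hab, by linarith, fun x hx => ⟨?_, ?_⟩⟩
  · linarith [min_le_right (f a) (f b), hax x hx]
  · linarith [le_max_left (f a) (f b), hxb x hx]

lemma antipodalPair_of_sub_notMem_interior_sub {K : Set E} (hK : Convex ℝ K)
    (hKint : (interior K).Nonempty) {a b : E} (ha : a ∈ K) (hb : b ∈ K)
    (hab : a - b ∉ interior (K - K)) : AntipodalPair K a b := by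
  obtain ⟨w, hw⟩ := hKint
  have h₀ : (0 : E) ∈ interior (K - K) := by
    simpa using subset_interior_sub_left (sub_mem_sub hw (interior_subset hw))
  obtain ⟨f, hpos, hle⟩ := exists_pos_forall_le_of_notMem_interior (hK.sub hK) h₀ hab
  exact antipodalPair_of_forall_sub_le f ha hb hpos hle

lemma coveringNumber_le_card {K : Set E} {ι : Type*} [Fintype ι] (x : ι → E) (l : ι → ℝ)
    (hl : ∀ i, l i ∈ Ioo 0 1) (hK : K ⊆ ⋃ i, x i +ᵥ l i • K) :
    coveringNumber K ≤ Fintype.card ι := by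
  let e := Fintype.equivFin ι
  refine Nat.sInf_le ⟨x ∘ e.symm, l ∘ e.symm, fun i => hl _, fun y hy => ?_⟩
  obtain ⟨i, hi⟩ := mem_iUnion.1 (hK hy)
  exact mem_iUnion.2 ⟨e i, by simpa using hi⟩

theorem coveringNumber_convexHull_lt_card {t : Finset E} {a b : E} (ha : a ∈ t) (hb : b ∈ t)
    (hab : a ≠ b) (hint : a - b ∈ interior (convexHull ℝ ↑t - convexHull ℝ ↑t)) :
    coveringNumber (convexHull ℝ (t : Set E)) < t.card := by
  set K := convexHull ℝ (t : Set E)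
  have hK : Convex ℝ K := convex_convexHull ℝ _
  obtain ⟨δ, hδ, hpq⟩ := exists_one_add_smul_mem_of_mem_interior hint
  obtain ⟨p, hp, q, hq, hpq⟩ := mem_sub.1 hpq
  have habt : {a, b} ⊆ t := Finset.insert_subset ha (Finset.singleton_subset_iff.2 hb)
  have hcard : ({a, b} : Finset E).card = 2 := Finset.card_pair hab
  have ht : 2 ≤ t.card := hcard ▸ Finset.card_le_card habt
  set θ : ℝ := (t.card : ℝ)⁻¹
  set η : ℝ := θ / (1 + δ)
  have hθ : 0 < θ ∧ θ < 1 := ⟨by positivity, inv_lt_one_of_one_lt₀ (by norm_cast)⟩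
  have hη : 0 < η ∧ η < θ := ⟨by positivity, div_lt_self hθ.1 (by linarith)⟩
  have hθt : t.card * θ ≤ 1 := (mul_inv_cancel₀ (by positivity)).le
  have hmerge : θ • b - η • q = θ • a - η • p := by
    have : η • (p - q) = θ • (a - b) := by
      rw [hpq, smul_smul, div_mul_cancel₀ _ (by linarith : (1 + δ) ≠ 0)]
    rw [smul_sub, smul_sub] at this
    rw [sub_eq_sub_iff_add_eq_add, ← sub_eq_sub_iff_add_eq_add.1 this]
    abel
  -- The homothets at `a` and `b` are merged into the one indexed by `none`.
  let x : Option ↥(t \ {a, b}) → E := fun i =>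
    i.elim (θ • a - η • p) fun y => θ • (y : E)
  let l : Option ↥(t \ {a, b}) → ℝ := fun i => i.elim (η + (1 - θ)) fun _ => 1 - θ
  have hl : ∀ i, l i ∈ Ioo 0 1 := by
    rintro (_ | _) <;> constructor <;> simp only [l, Option.elim] <;> linarith
  have hcover : K ⊆ ⋃ i, x i +ᵥ l i • K := by
    intro z hz
    obtain ⟨y, hy, hzy⟩ := Finset.exists_mem_vadd_smul_convexHull hθ.2 hθt hz
    by_cases hyab : y = a ∨ y = b
    · refine mem_iUnion.2 ⟨none, ?_⟩
      rcases hyab with rfl | rfl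
      · exact hK.vadd_smul_subset_vadd_smul hp hη.1.le (by linarith) _ hzy
      · simpa only [x, l, Option.elim, hmerge] using
          hK.vadd_smul_subset_vadd_smul hq hη.1.le (by linarith) _ hzy
    · exact mem_iUnion.2 ⟨some ⟨y, Finset.mem_sdiff.2 ⟨hy, by simpa using hyab⟩⟩, hzy⟩
  calc coveringNumber K ≤ Fintype.card (Option ↥(t \ {a, b})) :=
        coveringNumber_le_card x l hl hcover
    _ = t.card - 2 + 1 := by
      rw [Fintype.card_option, Fintype.card_coe, Finset.card_sdiff_of_subset habt, hcard]
    _ < t.card := by omega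

end Euclidean

theorem extremePoints_pairwise_antipodal_general
    (L M : Set (EuclideanSpace ℝ (Fin 3)))
    (hL : IsParallelogram L) (hM : IsParallelogram M)
    (K : Set (EuclideanSpace ℝ (Fin 3)))
    (hK : K = convexHull ℝ (L ∪ M))
    (hKbody : (interior K).Nonempty)
    (hc : coveringNumber K = 8) :
    ∀ a ∈ Set.extremePoints ℝ K, ∀ b ∈ Set.extremePoints ℝ K, a ≠ b →
      AntipodalPair K a b := by
  intro a ha b hb hab
  obtain ⟨tL, htL, rfl⟩ := hL.exists_finset_card_le_four_eq_convexHull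
  obtain ⟨tM, htM, rfl⟩ := hM.exists_finset_card_le_four_eq_convexHull
  have hKt : K = convexHull ℝ ↑(tL ∪ tM) := by
    rw [hK, Finset.coe_union, convexHull_convexHull_union_left, convexHull_convexHull_union_right]
  have hcard : (tL ∪ tM).card ≤ 8 := (Finset.card_union_le _ _).trans (by omega)
  by_contra hnot
  have hint : a - b ∈ interior (K - K) := by
    by_contra h
    exact hnot (antipodalPair_of_sub_notMem_interior_sub (hK ▸ convex_convexHull ℝ _) hKbody
      ha.1 hb.1 h)
  subst hKt
  have := coveringNumber_convexHull_lt_card (extremePoints_convexHull_subset ha)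
    (extremePoints_convexHull_subset hb) hab hint
  omega

theorem extremePoints_pairwise_antipodal
    (L M : Set (EuclideanSpace ℝ (Fin 3)))
    (hL : IsParallelogram L) (hM : IsParallelogram M)
    (K : Set (EuclideanSpace ℝ (Fin 3)))
    (hK : K = convexHull ℝ (L ∪ M))
    (hKbody : (interior K).Nonempty)
    (hc : coveringNumber K = 8)
    (hE : Set.extremePoints ℝ K = Set.extremePoints ℝ L ∪ Set.extremePoints ℝ M)
    (hcard : (Set.extremePoints ℝ K).ncard = 8) :
    ∀ a ∈ Set.extremePoints ℝ K, ∀ b ∈ Set.extremePoints ℝ K, a ≠ b →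
      AntipodalPair K a b :=
  extremePoints_pairwise_antipodal_general L M hL hM K hK hKbody hc
end
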